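/- arXiv:2002.02388 — 2 statements merged into one kernel-verified Lean document; each statement's English description precedes it below -/
import Mathlib

section
/- Let G be a group, H a subgroup, and θ : H → H' an isomorphism onto another subgroup H' of G. Let G*_θ = ⟨G, u | u h u^{-1} = θ(h) for all h ∈ H⟩ be the HNN extension of G relative to θ, with stable letter u. Let N be the normal closure in G*_θ of H. Then (G*_θ)/N is isomorphic to (G/⟨H, H'⟩^G) * ℤ, where ⟨H, H'⟩^G is the normal closure of H ∪ H' in G. -/
/-!
Both sides are presented by the generators of `G` together with one extra letter (`t`, resp. the
generator of `ℤ`). Killing `A` in `G*_φ` also kills `B = t A t⁻¹`, and once `A` and `B` are trivial the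
HNN relations `t a t⁻¹ = φ a` hold for free, so the letter `t` is left without relations.
-/

namespace HNNExtension

variable {G : Type*} [Group G] {A B : Subgroup G} {φ : A ≃* B}

theorem of_mem_normalClosure_image_of_mem_right {b : G} (hb : b ∈ B) :
    (of b : HNNExtension G A B φ) ∈ Subgroup.normalClosure (of '' (A : Set G)) := by
  have hconj := equiv_eq_conj (φ := φ) (φ.symm (⟨b, hb⟩ : B))
  rw [φ.apply_symm_apply] at hconj
  rw [hconj]
  exact Subgroup.normalClosure_normal.conj_mem _
    (Subgroup.subset_normalClosure (Set.mem_image_of_mem of (φ.symm ⟨b, hb⟩).2)) t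

theorem normalClosure_union_le_comap_of :
    Subgroup.normalClosure ((A : Set G) ∪ B) ≤
      (Subgroup.normalClosure (of (φ := φ) '' (A : Set G))).comap of :=
  Subgroup.normalClosure_le_normal <| Set.union_subset
    (fun _ ha => Subgroup.subset_normalClosure ⟨_, ha, rfl⟩)
    (fun _ hb => of_mem_normalClosure_image_of_mem_right hb)

def liftOfLeKer {K : Type*} [Group K] (f : G →* K) (hA : A ≤ f.ker) (hB : B ≤ f.ker) (k : K) :
    HNNExtension G A B φ →* K :=
  lift f k fun a => by rw [f.mem_ker.1 (hA a.2), f.mem_ker.1 (hB (φ a).2), mul_one, one_mul]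

variable (A B φ)

def quotientNormalClosureToCoprod :
    HNNExtension G A B φ ⧸ Subgroup.normalClosure (of (φ := φ) '' (A : Set G)) →*
      Monoid.Coprod (G ⧸ Subgroup.normalClosure ((A : Set G) ∪ B)) (Multiplicative ℤ) :=
  have hker : Subgroup.normalClosure ((A : Set G) ∪ B) ≤
      (Monoid.Coprod.inl.comp (QuotientGroup.mk' _)).ker := by
    rw [← MonoidHom.comap_ker]
    exact (QuotientGroup.ker_mk' _).ge.trans (MonoidHom.ker_le_comap _ _)
  QuotientGroup.lift _
    (liftOfLeKer (Monoid.Coprod.inl.comp (QuotientGroup.mk' _))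
      (fun _ ha => hker (Subgroup.subset_normalClosure (Or.inl ha)))
      (fun _ hb => hker (Subgroup.subset_normalClosure (Or.inr hb)))
      (Monoid.Coprod.inr (Multiplicative.ofAdd 1)))
    (Subgroup.normalClosure_le_normal <| by
      rintro _ ⟨a, ha, rfl⟩
      exact hker (Subgroup.subset_normalClosure (Or.inl ha)))

def coprodToQuotientNormalClosure :
    Monoid.Coprod (G ⧸ Subgroup.normalClosure ((A : Set G) ∪ B)) (Multiplicative ℤ) →*
      HNNExtension G A B φ ⧸ Subgroup.normalClosure (of (φ := φ) '' (A : Set G)) :=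
  Monoid.Coprod.lift (QuotientGroup.map _ _ of normalClosure_union_le_comap_of)
    (zpowersHom _ (QuotientGroup.mk' _ t))

def quotientNormalClosureEquivCoprod :
    HNNExtension G A B φ ⧸ Subgroup.normalClosure (of (φ := φ) '' (A : Set G)) ≃*
      Monoid.Coprod (G ⧸ Subgroup.normalClosure ((A : Set G) ∪ B)) (Multiplicative ℤ) :=
  MonoidHom.toMulEquiv (quotientNormalClosureToCoprod A B φ) (coprodToQuotientNormalClosure A B φ)
    (QuotientGroup.monoidHom_ext _ <| hom_ext
      (by ext; simp [quotientNormalClosureToCoprod, coprodToQuotientNormalClosure, liftOfLeKer])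
      (by simp [quotientNormalClosureToCoprod, coprodToQuotientNormalClosure, liftOfLeKer]))
    (Monoid.Coprod.hom_ext
      (QuotientGroup.monoidHom_ext _ <| by
        ext; simp [quotientNormalClosureToCoprod, coprodToQuotientNormalClosure, liftOfLeKer])
      (by ext; simp [quotientNormalClosureToCoprod, coprodToQuotientNormalClosure, liftOfLeKer]))

end HNNExtension

/-- Let `G*_θ` be the HNN extension of `G` relative to an isomorphism
`θ : A ≃ B` between subgroups of `G`, and let `N` be the normal closure in `G*_θ` of (the
image of) `A`. Then `(G*_θ)/N ≅ (G / ⟨A ∪ B⟩^G) * ℤ`, the free product of the quotient of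
`G` by the normal closure of `A ∪ B` with the infinite cyclic group. -/
theorem hnn_quotient_by_normal_closure {G : Type*} [Group G] (A B : Subgroup G) (θ : A ≃* B) :
    Nonempty
      ((HNNExtension G A B θ ⧸
          Subgroup.normalClosure ((HNNExtension.of (φ := θ)) '' (A : Set G))) ≃*
        Monoid.Coprod (G ⧸ Subgroup.normalClosure ((A : Set G) ∪ (B : Set G)))
          (Multiplicative ℤ)) :=
  ⟨HNNExtension.quotientNormalClosureEquivCoprod A B θ⟩
end

section
/- Let G and K be finitely generated groups. Then corank(G) ≤ corank(G * ℤ), and more specifically corank(G * ℤ) = corank(G) + 1. -/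
/-!
Both inequalities `corank G + corank K ≤ corank (G ∗ K) ≤ corank G + rank K` hold for finitely
generated `G`, `K`, and `ℤ` has corank and rank `1`. The first one sends the two factors onto
complementary free factors of `F_{r+s}`. For the second, let `φ : G ∗ K ↠ F_n` and `H = φ(G)`.
By Nielsen–Schreier `H` is free, and `F_n` is generated by a basis of `H` together with the images
of `rank K` generators of `K`. Abelianizing, `ℤ^n` is spanned by their images, so the basis of `H`
has at least `n - rank K` elements and `H`, hence `G`, maps onto `F_{n - rank K}`.
-/

/-- The corank of a group `G`: the largest `r` such that there is an epimorphism of `G`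
onto the free group of rank `r`. -/
noncomputable def corank (G : Type*) [Group G] : ℕ :=
  sSup {r : ℕ | ∃ φ : G →* FreeGroup (Fin r), Function.Surjective φ}

open Function Module Subgroup
open scoped Monoid.Coprod

theorem FreeGroup.surjective_of_forall_of_mem_range {ι H : Type*} [Group H]
    {f : H →* FreeGroup ι} (h : ∀ i, of i ∈ f.range) : Surjective f := by
  rw [← MonoidHom.range_eq_top, eq_top_iff, ← closure_range_of, closure_le]
  rintro _ ⟨i, rfl⟩
  exact h i

theorem Subgroup.closure_image_eq_top {G H : Type*} [Group G] [Group H] {f : G →* H}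
    (hf : Surjective f) {s : Set G} (hs : closure s = ⊤) : closure (f '' s) = ⊤ := by
  rw [← MonoidHom.map_closure, hs, map_top_of_surjective f hf]

theorem FreeGroup.card_le_card_of_closure_eq_top {ι : Type*} [Fintype ι]
    {S : Finset (FreeGroup ι)} (hS : closure (S : Set (FreeGroup ι)) = ⊤) :
    Fintype.card ι ≤ S.card := by
  classical
  let ρ : FreeGroup ι →* Multiplicative (ι → ℤ) := lift fun i => .ofAdd (Pi.single i 1)
  let v : FreeGroup ι → ι → ℤ := fun x => (ρ x).toAdd
  have hv (x : FreeGroup ι) : v x ∈ Submodule.span ℤ (S.image v : Set (ι → ℤ)) := by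
    induction hS ▸ mem_top x using closure_induction with
    | mem x hx => exact Submodule.subset_span (Finset.mem_image_of_mem v hx)
    | one => simp [v]
    | mul x y _ _ hx hy => simpa [v] using add_mem hx hy
    | inv x _ hx => simpa [v] using neg_mem hx
  have hspan : Submodule.span ℤ (S.image v : Set (ι → ℤ)) = ⊤ := by
    rw [eq_top_iff, ← (Pi.basisFun ℤ ι).span_eq, Submodule.span_le]
    rintro _ ⟨i, rfl⟩
    simpa [v, ρ] using hv (of i)
  calc Fintype.card ι = finrank ℤ (Submodule.span ℤ (S.image v : Set (ι → ℤ))) := by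
        rw [hspan, finrank_top, finrank_fintype_fun_eq_card]
    _ ≤ (S.image v).card := finrank_span_finset_le_card _
    _ ≤ S.card := Finset.card_image_le

namespace FreeGroupBasis

variable {X H : Type*} [Group H]

theorem closure_range_eq_top (b : FreeGroupBasis X H) : closure (Set.range b) = ⊤ := by
  have : Set.range b = b.repr.symm '' Set.range FreeGroup.of := by
    rw [← Set.range_comp]; rfl
  rw [this]
  exact closure_image_eq_top (f := b.repr.symm.toMonoidHom) b.repr.symm.surjective
    (FreeGroup.closure_range_of X)

theorem exists_surjective_freeGroup (b : FreeGroupBasis X H) {β : Type*} (e : β ↪ X) :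
    ∃ π : H →* FreeGroup β, Surjective π := by
  refine ⟨b.lift (extend e FreeGroup.of 1),
    LeftInverse.surjective (g := FreeGroup.lift (b ∘ e)) ?_⟩
  refine DFunLike.congr_fun (FreeGroup.ext_hom (f := (b.lift _).comp (FreeGroup.lift _))
    (g := MonoidHom.id _) fun i => ?_)
  simp [e.injective.extend_apply]

end FreeGroupBasis

theorem FreeGroup.card_le_of_basis_sup_closure_eq_top {ι X : Type*} [Fintype ι] [Fintype X]
    {H : Subgroup (FreeGroup ι)} (b : FreeGroupBasis X H) {T : Finset (FreeGroup ι)}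
    (h : H ⊔ closure (T : Set (FreeGroup ι)) = ⊤) :
    Fintype.card ι ≤ Fintype.card X + T.card := by
  classical
  have hH : closure (Set.range (H.subtype ∘ b)) = H := by
    rw [Set.range_comp, ← MonoidHom.map_closure, b.closure_range_eq_top,
      ← MonoidHom.range_eq_map, range_subtype]
  calc Fintype.card ι ≤ (Finset.univ.image (H.subtype ∘ b) ∪ T).card := by
        refine card_le_card_of_closure_eq_top ?_
        rw [Finset.coe_union, Subgroup.closure_union, Finset.coe_image, Finset.coe_univ,
          Set.image_univ, hH, h]
    _ ≤ Fintype.card X + T.card :=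
        (Finset.card_union_le _ _).trans (Nat.add_le_add_right Finset.card_image_le _)

section Corank

variable {G K : Type*} [Group G] [Group K]

open Monoid.Coprod (inl inr)

theorem bddAbove_corank_set [Group.FG G] :
    BddAbove {r : ℕ | ∃ φ : G →* FreeGroup (Fin r), Surjective φ} := by
  obtain ⟨S, hcard, hS⟩ := Group.rank_spec G
  refine ⟨Group.rank G, ?_⟩
  rintro r ⟨φ, hφ⟩
  calc r = Fintype.card (Fin r) := (Fintype.card_fin r).symm
    _ ≤ (S.image φ).card := by
        refine FreeGroup.card_le_card_of_closure_eq_top ?_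
        rw [Finset.coe_image]
        exact closure_image_eq_top hφ hS
    _ ≤ Group.rank G := hcard ▸ Finset.card_image_le

variable (G) in
theorem corank_spec [Group.FG G] :
    ∃ φ : G →* FreeGroup (Fin (corank G)), Surjective φ :=
  Nat.sSup_mem (s := {r : ℕ | ∃ φ : G →* FreeGroup (Fin r), Surjective φ})
    ⟨0, 1, fun _ => ⟨1, Subsingleton.elim _ _⟩⟩ bddAbove_corank_set

theorem le_corank [Group.FG G] {r : ℕ} {φ : G →* FreeGroup (Fin r)} (hφ : Surjective φ) :
    r ≤ corank G :=
  le_csSup bddAbove_corank_set ⟨φ, hφ⟩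

instance Monoid.Coprod.instFG [Group.FG G] [Group.FG K] : Group.FG (G ∗ K) := by
  classical
  obtain ⟨S, hS⟩ := Group.fg_def.1 ‹Group.FG G›
  obtain ⟨T, hT⟩ := Group.fg_def.1 ‹Group.FG K›
  refine Group.fg_def.2 ⟨S.image inl ∪ T.image inr, ?_⟩
  rw [Finset.coe_union, Finset.coe_image, Finset.coe_image, Subgroup.closure_union,
    ← MonoidHom.map_closure, ← MonoidHom.map_closure, hS, hT, ← MonoidHom.range_eq_map,
    ← MonoidHom.range_eq_map,     Monoid.Coprod.range_inl_sup_range_inr]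

theorem corank_add_corank_le_corank_coprod [Group.FG G] [Group.FG K] :
    corank G + corank K ≤ corank (G ∗ K) := by
  obtain ⟨φ, hφ⟩ := corank_spec G
  obtain ⟨ψ, hψ⟩ := corank_spec K
  refine le_corank (φ := Monoid.Coprod.lift ((FreeGroup.map (Fin.castAdd _)).comp φ)
    ((FreeGroup.map (Fin.natAdd _)).comp ψ)) (FreeGroup.surjective_of_forall_of_mem_range ?_)
  intro i
  induction i using Fin.addCases with
  | left i =>
    obtain ⟨g, hg⟩ := hφ (.of i)
    exact ⟨.inl g, by simp [hg]⟩
  | right i =>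
    obtain ⟨k, hk⟩ := hψ (.of i)
    exact ⟨.inr k, by simp [hk]⟩

theorem exists_surjective_freeGroup_of_coprod {T : Finset K} (hT : closure (T : Set K) = ⊤)
    {n : ℕ} {φ : G ∗ K →* FreeGroup (Fin n)} (hφ : Surjective φ) :
    ∃ ψ : G →* FreeGroup (Fin (n - T.card)), Surjective ψ := by
  let H := (φ.comp inl).range
  have hgen :
      (φ.comp inl).range ⊔ closure ((T.image (φ.comp inr) : Finset _) : Set _) = ⊤ := by
    rw [Finset.coe_image, ← MonoidHom.map_closure, hT, ← MonoidHom.range_eq_map,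
      MonoidHom.range_comp, MonoidHom.range_comp, ← Subgroup.map_sup,
      Monoid.Coprod.range_inl_sup_range_inr, ← MonoidHom.range_eq_map,
      MonoidHom.range_eq_top.2 hφ]
  -- `IsFreeGroup H` is Nielsen–Schreier (`subgroupIsFreeOfIsFree`).
  obtain ⟨e⟩ : Nonempty (Fin (n - T.card) ↪ IsFreeGroup.Generators H) := by
    cases finite_or_infinite (IsFreeGroup.Generators H)
    · have := Fintype.ofFinite (IsFreeGroup.Generators H)
      refine Embedding.nonempty_of_card_le ?_
      have hcard := FreeGroup.card_le_of_basis_sup_closure_eq_top (IsFreeGroup.basis H) hgen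
      have := Finset.card_image_le (s := T) (f := φ.comp inr)
      rw [Fintype.card_fin] at hcard ⊢
      omega
    · exact ⟨Fin.valEmbedding.trans (Infinite.natEmbedding _)⟩
  obtain ⟨π, hπ⟩ := FreeGroupBasis.exists_surjective_freeGroup (IsFreeGroup.basis H) e
  exact ⟨π.comp (φ.comp inl).rangeRestrict,
    hπ.comp (MonoidHom.rangeRestrict_surjective _)⟩

theorem corank_coprod_le_corank_add_rank [Group.FG G] [Group.FG K] :
    corank (G ∗ K) ≤ corank G + Group.rank K := by
  obtain ⟨T, hcard, hT⟩ := Group.rank_spec K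
  obtain ⟨φ, hφ⟩ := corank_spec (G ∗ K)
  obtain ⟨ψ, hψ⟩ := exists_surjective_freeGroup_of_coprod hT hφ
  have := le_corank hψ
  omega

end Corank

theorem one_le_corank_int : 1 ≤ corank (Multiplicative ℤ) := by
  refine le_corank (φ := zpowersHom _ (FreeGroup.of 0))
    (FreeGroup.surjective_of_forall_of_mem_range fun i => ?_)
  exact ⟨.ofAdd 1, by simp [Subsingleton.elim i 0]⟩

theorem rank_int_le_one : Group.rank (Multiplicative ℤ) ≤ 1 := by
  refine (Group.rank_le (S := {.ofAdd 1}) ?_).trans_eq (Finset.card_singleton _)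
  rw [Finset.coe_singleton, eq_top_iff]
  intro x _
  exact mem_closure_singleton.2 ⟨x.toAdd, by simp [← ofAdd_zsmul]⟩

/-- For a finitely generated group `G`,
`corank G ≤ corank (G * ℤ)` and `corank (G * ℤ) = corank G + 1`. -/
theorem corank_coprod_int (G : Type*) [Group G] [Group.FG G] :
    corank G ≤ corank (Monoid.Coprod G (Multiplicative ℤ)) ∧
    corank (Monoid.Coprod G (Multiplicative ℤ)) = corank G + 1 := by
  have hge : corank G + corank (Multiplicative ℤ) ≤ corank (G ∗ Multiplicative ℤ) :=
    corank_add_corank_le_corank_coprod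
  have hle : corank (G ∗ Multiplicative ℤ) ≤ corank G + Group.rank (Multiplicative ℤ) :=
    corank_coprod_le_corank_add_rank
  have := one_le_corank_int
  have := rank_int_le_one
  omega
end
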